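/- Let 𝓗 be a connected hypergraph on H equipped with a total order on H. Then the flip rewriting on constructions of 𝓗 is terminating: there is no infinite sequence S₀ → S₁ → S₂ → ⋯ of flips of constructions of 𝓗. -/

import Mathlib

open scoped Classical

noncomputable section

/-! ## Hypergraphs (nestohedra combinatorics), after Curien–Laplante-Anfossi:
hypergraphs, restrictions, connectivity, saturation, reconnected restriction,
constructs/constructions, the face order, the flip rewriting, and terms over the
associated signatures. -/

/-- A hypergraph on a finite vertex set: a finite set of nonempty hyperedges whose union is
the vertex set, assumed atomic (every singleton is a hyperedge). -/
structure HGraph (α : Type*) [DecidableEq α] where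
  verts : Finset α
  edges : Finset (Finset α)
  edges_nonempty : ∀ e ∈ edges, e.Nonempty
  edges_subset : ∀ e ∈ edges, e ⊆ verts
  atomic : ∀ v ∈ verts, {v} ∈ edges

namespace HGraph

variable {α : Type*} [DecidableEq α]

/-- The plain restriction `𝓗_X` of a hypergraph to a subset `X` of its vertices. -/
def restrict (H : HGraph α) (X : Finset α) : HGraph α where
  verts := X ∩ H.verts
  edges := H.edges.filter (· ⊆ X)
  edges_nonempty e he := H.edges_nonempty e (Finset.mem_filter.mp he).1
  edges_subset e he :=
    Finset.subset_inter (Finset.mem_filter.mp he).2 (H.edges_subset e (Finset.mem_filter.mp he).1)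
  atomic v hv := by
    rcases Finset.mem_inter.mp hv with ⟨h1, h2⟩
    exact Finset.mem_filter.mpr ⟨H.atomic v h2, Finset.singleton_subset_iff.mpr h1⟩

/-- A hypergraph is connected if its vertex set is nonempty and admits no nontrivial
partition `X₁ ∪ X₂` such that every edge lies in `X₁` or in `X₂`. -/
def Connected (H : HGraph α) : Prop :=
  H.verts.Nonempty ∧ ∀ X₁ X₂ : Finset α, X₁.Nonempty → X₂.Nonempty →
    Disjoint X₁ X₂ → X₁ ∪ X₂ = H.verts → ∃ e ∈ H.edges, ¬e ⊆ X₁ ∧ ¬e ⊆ X₂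

/-- `C` is (the vertex set of) a connected component of `H`: a maximal connected subset. -/
def IsComponent (H : HGraph α) (C : Finset α) : Prop :=
  C ⊆ H.verts ∧ (H.restrict C).Connected ∧
    ∀ D : Finset α, C ⊆ D → D ⊆ H.verts → (H.restrict D).Connected → D = C

/-- `y` and `z` lie in the same connected component of `H`. -/
def SameComponent (H : HGraph α) (y z : α) : Prop :=
  ∃ C : Finset α, H.IsComponent C ∧ y ∈ C ∧ z ∈ C

/-- The saturation `Sat(𝓗)`: the set of (nonempty) connected subsets of vertices. -/
def sat (H : HGraph α) : Finset (Finset α) :=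
  H.verts.powerset.filter fun X => (H.restrict X).Connected

theorem singleton_connected (H : HGraph α) {v : α} (hv : v ∈ H.verts) :
    (H.restrict {v}).Connected := by
  constructor
  · exact ⟨v, Finset.mem_inter.mpr ⟨Finset.mem_singleton_self v, hv⟩⟩
  · intro X₁ X₂ h₁ h₂ hd hu
    exfalso
    have hv' : ({v} : Finset α) ∩ H.verts = {v} :=
      Finset.inter_eq_left.mpr (Finset.singleton_subset_iff.mpr hv)
    have hu' : X₁ ∪ X₂ = ({v} : Finset α) := hu.trans hv'
    have hX₁ : X₁ ⊆ {v} := hu' ▸ Finset.subset_union_left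
    have hX₂ : X₂ ⊆ {v} := hu' ▸ Finset.subset_union_right
    obtain ⟨a, ha⟩ := h₁
    obtain ⟨b, hb⟩ := h₂
    have ha' := Finset.mem_singleton.mp (hX₁ ha)
    have hb' := Finset.mem_singleton.mp (hX₂ hb)
    subst ha'; exact Finset.disjoint_left.mp hd ha (hb' ▸ hb)

/-- The reconnected restriction `𝓗 ↾ X` of `𝓗` to `X`. -/
def reconRestrict (H : HGraph α) (X : Finset α) : HGraph α where
  verts := X ∩ H.verts
  edges := (H.sat.image (· ∩ X)).filter (·.Nonempty)
  edges_nonempty e he := (Finset.mem_filter.mp he).2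
  edges_subset := by
    intro e he
    rcases Finset.mem_image.mp (Finset.mem_filter.mp he).1 with ⟨Z, hZ, rfl⟩
    have hZv : Z ⊆ H.verts := Finset.mem_powerset.mp (Finset.mem_filter.mp hZ).1
    exact fun a ha => Finset.mem_inter.mpr
      ⟨(Finset.mem_inter.mp ha).2, hZv (Finset.mem_inter.mp ha).1⟩
  atomic := by
    intro v hv
    rcases Finset.mem_inter.mp hv with ⟨h1, h2⟩
    refine Finset.mem_filter.mpr ⟨Finset.mem_image.mpr ⟨{v}, ?_, ?_⟩, ?_⟩
    · exact Finset.mem_filter.mpr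
        ⟨Finset.mem_powerset.mpr (Finset.singleton_subset_iff.mpr h2),
         H.singleton_connected h2⟩
    · exact Finset.inter_eq_left.mpr (Finset.singleton_subset_iff.mpr h1)
    · exact ⟨v, by simp [Finset.inter_eq_left.mpr (Finset.singleton_subset_iff.mpr h1)]⟩

/-- `x ⇝ {y,z}` in `𝓗`: after removing `x`, the vertices `y` and `z` lie in the same
connected component.  Its negation is "`x` disconnects `y` and `z` in `𝓗`". -/
def Links (H : HGraph α) (x y z : α) : Prop :=
  (H.restrict (H.verts \ {x})).SameComponent y z

/-- A hypergraph is contextual if for every connected subset `Y` of cardinality at least 3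
and all distinct `x, y, z ∈ Y`, `x` disconnects `y` and `z` in `𝓗_Y` iff it does in `𝓗`. -/
def Contextual (H : HGraph α) : Prop :=
  ∀ Y : Finset α, Y ⊆ H.verts → (H.restrict Y).Connected → 3 ≤ Y.card →
    ∀ x y z : α, x ∈ Y → y ∈ Y → z ∈ Y → x ≠ y → y ≠ z → x ≠ z →
      ((H.restrict Y).Links x y z ↔ H.Links x y z)

end HGraph

/-- Finite rooted trees with nodes decorated by finite sets (potential constructs). -/
inductive FTree (α : Type*) : Type _ where
  | node : Finset α → List (FTree α) → FTree α

namespace FTree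

variable {α : Type*} [DecidableEq α]

/-- The decoration of the root node. -/
def label : FTree α → Finset α
  | node Y _ => Y

/-- The list of children of the root node. -/
def children : FTree α → List (FTree α)
  | node _ ts => ts

/-- The support of a tree: the union of the decorations of its nodes. -/
def support : FTree α → Finset α
  | node Y [] => Y
  | node Y (t :: ts) => support t ∪ support (node Y ts)

/-- The list of decorations of the nodes of a tree. -/
def labels : FTree α → List (Finset α)
  | node Y [] => [Y]
  | node Y (t :: ts) => labels t ++ labels (node Y ts)

/-- The dimension of a construct: the sum over its nodes `X` of `|X| - 1`. -/
def dim (T : FTree α) : ℕ := (T.labels.map fun X => X.card - 1).sum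

mutual
  /-- The (full) subtree rooted at the node decorated by `X`, if any. -/
  def subtreeAt : FTree α → Finset α → Option (FTree α)
    | node Y ts, X => if Y = X then some (node Y ts) else subtreeAtList ts X
  def subtreeAtList : List (FTree α) → Finset α → Option (FTree α)
    | [], _ => none
    | t :: ts, X => (subtreeAt t X).elim (subtreeAtList ts X) some
end

/-- The support `supp (T ↾ X)` of the subtree rooted at the node decorated by `X`
(or `∅` if there is no such node). -/
def suppAt (T : FTree α) (X : Finset α) : Finset α :=
  ((T.subtreeAt X).map support).getD ∅

mutual
  /-- The list of supports of the subtrees rooted at the nodes of `T` (its nested set). -/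
  def nests : FTree α → List (Finset α)
    | node Y ts => support (node Y ts) :: nestsList ts
  def nestsList : List (FTree α) → List (Finset α)
    | [] => []
    | t :: ts => nests t ++ nestsList ts
end

/-- The nested set of a tree, as a finite set. -/
def nestSet (T : FTree α) : Finset (Finset α) := T.nests.toFinset

/-- `S ≺ T` (`S` is covered by `T`) in the face order: `T` is obtained from `S` by
contracting one edge between a node and its father (equivalently, the nested set of `T`
is obtained from that of `S` by removing one non-root element). -/
def CoveredBy (S T : FTree α) : Prop :=
  ∃ N ∈ S.nests, N ≠ S.support ∧ T.nestSet = S.nestSet.erase N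

/-- The face (subface) order `S ≼ T` on constructs: the reflexive–transitive closure of
the covering relation `≺`. -/
def FaceLe (S T : FTree α) : Prop := Relation.ReflTransGen CoveredBy S T

/-- `IsSubtree S T`: `S` is a (full) subtree of `T`. -/
inductive IsSubtree : FTree α → FTree α → Prop
  | refl (t : FTree α) : IsSubtree t t
  | child {s t u : FTree α} : IsSubtree s t → t ∈ u.children → IsSubtree s u

/-- In `T`, the node decorated by `X` has a child decorated by `Y`. -/
def ParentChild (X Y : Finset α) (T : FTree α) : Prop :=
  ∃ R : FTree α, IsSubtree R T ∧ R.label = X ∧ ∃ t ∈ R.children, t.label = Y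

mutual
  /-- Pruning: remove all (subtrees rooted at) nodes whose decoration is not a subset
  of `X`, keeping the root. -/
  def prune (X : Finset α) : FTree α → FTree α
    | node Y ts => node Y (pruneList X ts)
  def pruneList (X : Finset α) : List (FTree α) → List (FTree α)
    | [] => []
    | t :: ts => if t.label ⊆ X then prune X t :: pruneList X ts else pruneList X ts
end

end FTree

/-- `IsConstruct H T`: the tree `T` is a construct of the hypergraph `H`: its root `Y` is a
nonempty subset of the vertices, its children are constructs of the connected components of
`𝓗 ∖ Y` (one for each component, listed by increasing maximal vertex). -/
inductive IsConstruct {α : Type*} [LinearOrder α] : HGraph α → FTree α → Prop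
  | node {H : HGraph α} (Y : Finset α) (ts : List (FTree α))
      (hY : Y.Nonempty) (hYsub : Y ⊆ H.verts)
      (hmem : ∀ t ∈ ts, (H.restrict (H.verts \ Y)).IsComponent t.support)
      (hcover : ∀ C : Finset α, (H.restrict (H.verts \ Y)).IsComponent C →
        ∃ t ∈ ts, t.support = C)
      (hsorted : ts.Pairwise fun a b => a.support.max < b.support.max)
      (hchild : ∀ t ∈ ts, IsConstruct (H.restrict t.support) t) :
      IsConstruct H (FTree.node Y ts)

section ConstructionOrder

variable {α : Type*} [LinearOrder α]

/-- A construction: a construct all of whose nodes are singletons (a vertex of the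
nestohedron). -/
def IsConstruction (H : HGraph α) (T : FTree α) : Prop :=
  IsConstruct H T ∧ ∀ X ∈ T.labels, X.card = 1

/-- An `X`-face: a 2-dimensional construct whose unique non-singleton node is decorated
by `X`, of cardinality 3. -/
def IsXFace (H : HGraph α) (X : Finset α) (T : FTree α) : Prop :=
  IsConstruct H T ∧ X.card = 3 ∧ X ∈ T.labels ∧ ∀ Y ∈ T.labels, Y ≠ X → Y.card = 1

/-- Two distinct constructions are joined by an edge of the nestohedron: both are covered
by a common 1-dimensional construct. -/
def EdgeJoined (H : HGraph α) (S T : FTree α) : Prop :=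
  IsConstruction H S ∧ IsConstruction H T ∧ S ≠ T ∧
  ∃ V : FTree α, IsConstruct H V ∧ V.dim = 1 ∧ FTree.CoveredBy S V ∧ FTree.CoveredBy T V

/-- The flip rewriting relation `S → T` on constructions of an ordered hypergraph:
`S` and `T` are the two endpoints of an edge whose 1-dimensional face has unique
non-singleton node `{x, y}` with `x < y`, and in `S` the node `{x}` is the parent of the
node `{y}`. -/
def Flip (H : HGraph α) (S T : FTree α) : Prop :=
  IsConstruction H S ∧ IsConstruction H T ∧ S ≠ T ∧
  ∃ (V : FTree α) (x y : α), IsConstruct H V ∧ V.dim = 1 ∧ x ≠ y ∧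
    ({x, y} : Finset α) ∈ V.labels ∧ FTree.CoveredBy S V ∧ FTree.CoveredBy T V ∧
    FTree.ParentChild ({x} : Finset α) ({y} : Finset α) S ∧ x < y

/-- The coordinate vector of a construction `S` of `H`:
`v^S_x = |{e ∈ Sat(𝓗) : x ∈ e ⊆ supp (S ↾ x)}|`. -/
def coordVec (H : HGraph α) (S : FTree α) (x : α) : ℕ :=
  (H.sat.filter fun e => x ∈ e ∧ e ⊆ S.suppAt {x}).card

end ConstructionOrder

/-- Raw terms over the signature `Σ_𝓗` (and `Σ^c_𝓗`): variables are (connected) subsets,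
function symbols are pairs `(X, Y)` of subsets, applied to a list of arguments. -/
inductive HTerm (α : Type*) : Type _ where
  | var : Finset α → HTerm α
  | app : Finset α → Finset α → List (HTerm α) → HTerm α

namespace HTerm

variable {α : Type*} [DecidableEq α]

/-- The (output) sort of a term. -/
def sortOf : HTerm α → Finset α
  | var A => A
  | app _ Y _ => Y

/-- The list of variables occurring in a term. -/
def varsList : HTerm α → List (Finset α)
  | var A => [A]
  | app _ _ [] => []
  | app X Y (t :: ts) => varsList t ++ varsList (app X Y ts)

/-- The list of first components of the function symbols occurring in a term. -/
def appFirsts : HTerm α → List (Finset α)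
  | var _ => []
  | app X _ [] => [X]
  | app X Y (t :: ts) => appFirsts t ++ appFirsts (app X Y ts)

/-- A term is closed if it contains no variables. -/
def Closed (t : HTerm α) : Prop := t.varsList = []

/-- The union `⋃ var(t)` of the variables of a term. -/
def varsUnion (t : HTerm α) : Finset α := t.varsList.foldr (· ∪ ·) ∅

mutual
  /-- Projection of a term to a decorated tree: every function symbol `(X, Y)` is sent to
  its first component `X`, and all variables are pruned. -/
  def toTree : HTerm α → FTree α
    | .var A => .node A []
    | .app X _ ts => .node X (toTreeList ts)
  def toTreeList : List (HTerm α) → List (FTree α)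
    | [] => []
    | .var _ :: ts => toTreeList ts
    | t :: ts => toTree t :: toTreeList ts
end

end HTerm

/-- Well-formed terms over the signature `Σ_𝓗` associated with the hypergraph `H`:
a variable is a connected subset (its own sort); a function symbol `(X, Y)` (with
`∅ ≠ X ⊆ Y ⊆ H` and `Y` connected) is applied to arguments whose sorts are exactly the
connected components of `𝓗_Y ∖ X`, listed by increasing maximal vertex. -/
inductive IsTerm {α : Type*} [LinearOrder α] (H : HGraph α) : HTerm α → Prop
  | var (A : Finset α) : A ⊆ H.verts → (H.restrict A).Connected → IsTerm H (.var A)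
  | app (X Y : Finset α) (ts : List (HTerm α)) :
      X.Nonempty → X ⊆ Y → Y ⊆ H.verts → (H.restrict Y).Connected →
      (∀ t ∈ ts, (H.restrict (Y \ X)).IsComponent t.sortOf) →
      (∀ C : Finset α, (H.restrict (Y \ X)).IsComponent C → ∃ t ∈ ts, t.sortOf = C) →
      ts.Pairwise (fun a b => a.sortOf.max < b.sortOf.max) →
      (∀ t ∈ ts, IsTerm H t) →
      IsTerm H (.app X Y ts)

/-! In a construction every vertex `v` labels exactly one node, and the support
`supp (S ↾ v)` of the subtree at that node is the least nest of `S` containing `v`.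
A flip `S → T` at `x < y` exchanges one nest for another inside the nest `P` of the node
`{x, y}` of the common edge. In `S` the least nest containing `x` is `P`; in `T` it is a
proper part of `P`, the least nests of the vertices other than `x` and `y` do not move, and
the only other way of exchanging the nests would give `T = S`. So the vector
`v ↦ supp (S ↾ v)` decreases strictly in the lexicographic order (smaller vertices first,
strict inclusion of nests), which is well founded since `H` has finitely many vertices. -/

namespace FTree

variable {α : Type*}

@[elab_as_elim, induction_eliminator]
theorem induction {P : FTree α → Prop}
    (node : ∀ (Y : Finset α) (ts : List (FTree α)), (∀ t ∈ ts, P t) → P (node Y ts)) :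
    ∀ T, P T
  | .node Y ts => node Y ts fun t _ => induction node t

variable {Y : Finset α} {ts : List (FTree α)} {R S T t : FTree α}

theorem IsSubtree.trans (h₁ : IsSubtree R S) (h₂ : IsSubtree S T) : IsSubtree R T := by
  induction h₂ with
  | refl => exact h₁
  | child _ ht ih => exact .child ih ht

theorem IsSubtree.of_mem (ht : t ∈ ts) : IsSubtree t (node Y ts) := .child (.refl t) ht

theorem isSubtree_node_iff : IsSubtree R (node Y ts) ↔ R = node Y ts ∨ ∃ t ∈ ts, IsSubtree R t := by
  constructor
  · rintro (_ | ⟨h, ht⟩)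
    exacts [Or.inl rfl, Or.inr ⟨_, ht, h⟩]
  · rintro (rfl | ⟨t, ht, h⟩)
    exacts [.refl _, h.trans (.of_mem ht)]

variable [DecidableEq α] {X N : Finset α} {R' : FTree α} {v : α}

theorem mem_support_node : v ∈ (node Y ts).support ↔ v ∈ Y ∨ ∃ t ∈ ts, v ∈ t.support := by
  induction ts with
  | nil => simp [support]
  | cons t ts ih =>
    simp only [support, Finset.mem_union, ih, List.mem_cons, exists_eq_or_imp]
    tauto

theorem mem_labels_node : X ∈ (node Y ts).labels ↔ X = Y ∨ ∃ t ∈ ts, X ∈ t.labels := by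
  induction ts with
  | nil => simp [labels]
  | cons t ts ih =>
    simp only [labels, List.mem_append, ih, List.mem_cons, exists_eq_or_imp]
    tauto

theorem mem_nestsList : N ∈ nestsList ts ↔ ∃ t ∈ ts, N ∈ t.nests := by
  induction ts with
  | nil => simp [nestsList]
  | cons t ts ih => simp [nestsList, ih]

theorem mem_nests_node :
    N ∈ (node Y ts).nests ↔ N = (node Y ts).support ∨ ∃ t ∈ ts, N ∈ t.nests := by
  rw [nests, List.mem_cons, mem_nestsList]

theorem label_subset_support (T : FTree α) : T.label ⊆ T.support := by
  cases T
  exact fun v hv => mem_support_node.mpr (Or.inl hv)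

theorem IsSubtree.support_subset (h : IsSubtree R T) : R.support ⊆ T.support := by
  induction h with
  | refl => rfl
  | @child t u _ ht ih =>
    cases u
    exact ih.trans fun v hv => mem_support_node.mpr (Or.inr ⟨t, ht, hv⟩)

theorem mem_nestSet_iff : N ∈ T.nestSet ↔ ∃ R, IsSubtree R T ∧ R.support = N := by
  rw [nestSet, List.mem_toFinset]
  induction T with
  | node Y ts ih =>
    simp only [mem_nests_node, isSubtree_node_iff]
    constructor
    · rintro (rfl | ⟨t, ht, hN⟩)
      · exact ⟨_, Or.inl rfl, rfl⟩
      · obtain ⟨R, hR, rfl⟩ := (ih t ht).mp hN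
        exact ⟨R, Or.inr ⟨t, ht, hR⟩, rfl⟩
    · rintro ⟨R, rfl | ⟨t, ht, hR⟩, rfl⟩
      exacts [Or.inl rfl, Or.inr ⟨t, ht, (ih t ht).mpr ⟨R, hR, rfl⟩⟩]

theorem IsSubtree.support_mem_nestSet (h : IsSubtree R T) : R.support ∈ T.nestSet :=
  mem_nestSet_iff.mpr ⟨R, h, rfl⟩

theorem mem_labels_iff : X ∈ T.labels ↔ ∃ R, IsSubtree R T ∧ R.label = X := by
  induction T with
  | node Y ts ih =>
    simp only [mem_labels_node, isSubtree_node_iff]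
    constructor
    · rintro (rfl | ⟨t, ht, hX⟩)
      · exact ⟨_, Or.inl rfl, rfl⟩
      · obtain ⟨R, hR, rfl⟩ := (ih t ht).mp hX
        exact ⟨R, Or.inr ⟨t, ht, hR⟩, rfl⟩
    · rintro ⟨R, rfl | ⟨t, ht, hR⟩, rfl⟩
      exacts [Or.inl rfl, Or.inr ⟨t, ht, (ih t ht).mpr ⟨R, hR, rfl⟩⟩]

theorem exists_isSubtree_mem_label (hv : v ∈ T.support) : ∃ R, IsSubtree R T ∧ v ∈ R.label := by
  induction T with
  | node Y ts ih =>
    rcases mem_support_node.mp hv with hv | ⟨t, ht, hv⟩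
    · exact ⟨_, .refl _, hv⟩
    · obtain ⟨R, hR, hvR⟩ := ih t ht hv
      exact ⟨R, hR.trans (.of_mem ht), hvR⟩

inductive WellFormed : FTree α → Prop
  | node {Y : Finset α} {ts : List (FTree α)} :
      Y.Nonempty → (∀ t ∈ ts, Disjoint Y t.support) →
      ts.Pairwise (Function.onFun Disjoint support) → (∀ t ∈ ts, WellFormed t) →
      WellFormed (node Y ts)

namespace WellFormed

theorem label_nonempty (hT : T.WellFormed) : T.label.Nonempty := by
  cases hT with | node hY _ _ _ => exact hY

theorem support_nonempty (hT : T.WellFormed) : T.support.Nonempty :=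
  hT.label_nonempty.mono (label_subset_support T)

theorem of_isSubtree (hT : T.WellFormed) (h : IsSubtree R T) : R.WellFormed := by
  induction h with
  | refl => exact hT
  | child _ ht ih => cases hT with | node _ _ _ hts => exact ih (hts _ ht)

theorem disjoint_label_support (hT : T.WellFormed) (h : IsSubtree R T) (hne : R ≠ T) :
    Disjoint T.label R.support := by
  cases h with
  | refl => exact absurd rfl hne
  | child h ht => cases hT with | node _ hd _ _ => exact (hd _ ht).mono_right h.support_subset

theorem support_ssubset (hT : T.WellFormed) (h : IsSubtree R T) (hne : R ≠ T) :
    R.support ⊂ T.support := by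
  refine h.support_subset.ssubset_of_ne fun he => ?_
  obtain ⟨v, hv⟩ := hT.label_nonempty
  exact Finset.disjoint_left.mp (hT.disjoint_label_support h hne) hv
    (he ▸ label_subset_support T hv)

theorem isSubtree_or_isSubtree_or_disjoint (hT : T.WellFormed) (h : IsSubtree R T)
    (h' : IsSubtree R' T) : IsSubtree R R' ∨ IsSubtree R' R ∨ Disjoint R.support R'.support := by
  induction T generalizing R R' with
  | node Y ts ih =>
    rcases isSubtree_node_iff.mp h with rfl | ⟨t, ht, h⟩
    · exact Or.inr (Or.inl h')
    rcases isSubtree_node_iff.mp h' with rfl | ⟨t', ht', h'⟩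
    · exact Or.inl (h.trans (.of_mem ht))
    cases hT with | node _ _ hpair hts =>
    by_cases htt : t = t'
    · subst htt
      exact ih t ht (hts t ht) h h'
    · exact Or.inr (Or.inr ((hpair.forall ht ht' htt).mono h.support_subset h'.support_subset))

theorem eq_of_support_eq (hT : T.WellFormed) (h : IsSubtree R T) (h' : IsSubtree R' T)
    (he : R.support = R'.support) : R = R' := by
  by_contra hne
  rcases hT.isSubtree_or_isSubtree_or_disjoint h h' with hRR' | hR'R | hd
  · exact ((hT.of_isSubtree h').support_ssubset hRR' hne).ne he
  · exact ((hT.of_isSubtree h).support_ssubset hR'R (Ne.symm hne)).ne he.symm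
  · obtain ⟨v, hv⟩ := (hT.of_isSubtree h).support_nonempty
    exact Finset.disjoint_left.mp hd hv (he ▸ hv)

theorem isSubtree_of_mem_label (hT : T.WellFormed) (h : IsSubtree R T) (h' : IsSubtree R' T)
    (hv : v ∈ R'.label) (hvR : v ∈ R.support) : IsSubtree R' R := by
  rcases hT.isSubtree_or_isSubtree_or_disjoint h' h with hR'R | hRR' | hd
  · exact hR'R
  · by_cases he : R = R'
    · exact he ▸ .refl R
    · exact absurd hvR (Finset.disjoint_left.mp
        ((hT.of_isSubtree h').disjoint_label_support hRR' he) hv)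
  · exact absurd hvR (Finset.disjoint_left.mp hd (label_subset_support R' hv))

theorem eq_of_mem_label (hT : T.WellFormed) (h : IsSubtree R T) (h' : IsSubtree R' T)
    (hv : v ∈ R.label) (hv' : v ∈ R'.label) : R = R' :=
  hT.eq_of_support_eq h h' <| subset_antisymm
    (hT.isSubtree_of_mem_label h' h hv (label_subset_support R' hv')).support_subset
    (hT.isSubtree_of_mem_label h h' hv' (label_subset_support R hv)).support_subset

theorem isLeast_support (hT : T.WellFormed) (h : IsSubtree R T) (hv : v ∈ R.label) :
    IsLeast {N | N ∈ T.nestSet ∧ v ∈ N} R.support := by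
  refine ⟨⟨h.support_mem_nestSet, label_subset_support R hv⟩, ?_⟩
  rintro N ⟨hN, hvN⟩
  obtain ⟨R', h', rfl⟩ := mem_nestSet_iff.mp hN
  exact (hT.isSubtree_of_mem_label h' h hv hvN).support_subset

theorem nestSet_eq_filter (hT : T.WellFormed) (h : IsSubtree R T) :
    R.nestSet = T.nestSet.filter (· ⊆ R.support) := by
  ext N
  simp only [Finset.mem_filter, mem_nestSet_iff]
  constructor
  · rintro ⟨R', h', rfl⟩
    exact ⟨⟨R', h'.trans h, rfl⟩, h'.support_subset⟩
  · rintro ⟨⟨R', h', rfl⟩, hsub⟩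
    refine ⟨R', ?_, rfl⟩
    rcases hT.isSubtree_or_isSubtree_or_disjoint h' h with hR'R | hRR' | hd
    · exact hR'R
    · rw [hT.eq_of_support_eq h' h (subset_antisymm hsub hRR'.support_subset)]
      exact .refl R
    · obtain ⟨v, hv⟩ := (hT.of_isSubtree h').support_nonempty
      exact absurd (hsub hv) (Finset.disjoint_left.mp hd hv)

theorem mem_label_iff (hT : T.WellFormed) (hv : v ∈ T.support) :
    v ∈ T.label ↔ ∀ N ∈ T.nestSet, v ∈ N → N = T.support := by
  constructor
  · intro hvT N hN hvN
    obtain ⟨R, h, rfl⟩ := mem_nestSet_iff.mp hN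
    exact subset_antisymm h.support_subset ((hT.isLeast_support (.refl T) hvT).2 ⟨hN, hvN⟩)
  · intro hroot
    obtain ⟨R, h, hvR⟩ := exists_isSubtree_mem_label hv
    rwa [hT.eq_of_support_eq h (.refl T)
      (hroot _ h.support_mem_nestSet (label_subset_support R hvR))] at hvR

end WellFormed

theorem subtreeAtList_eq_none_iff :
    subtreeAtList ts X = none ↔ ∀ t ∈ ts, t.subtreeAt X = none := by
  induction ts with
  | nil => simp [subtreeAtList]
  | cons t ts ih => cases h : t.subtreeAt X <;> simp [subtreeAtList, h, ih]

theorem exists_subtreeAt_eq_some (h : subtreeAtList ts X = some R) :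
    ∃ t ∈ ts, t.subtreeAt X = some R := by
  induction ts with
  | nil => simp [subtreeAtList] at h
  | cons t ts ih =>
    cases ht : t.subtreeAt X with
    | none =>
      simp only [subtreeAtList, ht, Option.elim_none] at h
      obtain ⟨t', ht', h'⟩ := ih h
      exact ⟨t', List.mem_cons_of_mem t ht', h'⟩
    | some R' =>
      simp only [subtreeAtList, ht, Option.elim_some] at h
      exact ⟨t, List.mem_cons_self, ht.trans h⟩

theorem isSubtree_of_subtreeAt_eq_some (h : T.subtreeAt X = some R) :
    IsSubtree R T ∧ R.label = X := by
  induction T with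
  | node Y ts ih =>
    rw [subtreeAt] at h
    split_ifs at h with hYX
    · cases h
      exact ⟨.refl _, hYX⟩
    · obtain ⟨t, ht, h⟩ := exists_subtreeAt_eq_some h
      obtain ⟨hR, hRX⟩ := ih t ht h
      exact ⟨hR.trans (.of_mem ht), hRX⟩

theorem subtreeAt_label_ne_none (h : IsSubtree R T) : T.subtreeAt R.label ≠ none := by
  induction h with
  | refl => cases R; simp [subtreeAt, label]
  | @child t u _ ht ih =>
    cases u
    rw [subtreeAt]
    split_ifs
    · simp
    · rw [Ne, subtreeAtList_eq_none_iff, not_forall]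
      exact ⟨t, by simpa using ⟨ht, ih⟩⟩

theorem WellFormed.suppAt_label (hT : T.WellFormed) (h : IsSubtree R T) :
    T.suppAt R.label = R.support := by
  obtain ⟨R', hR'⟩ := Option.ne_none_iff_exists'.mp (subtreeAt_label_ne_none h)
  obtain ⟨h', hlab⟩ := isSubtree_of_subtreeAt_eq_some hR'
  obtain ⟨v, hv⟩ := (hT.of_isSubtree h).label_nonempty
  rw [suppAt, hR', hT.eq_of_mem_label h' h (hlab ▸ hv) hv]
  rfl

theorem WellFormed.not_mem_suppAt_of_parentChild (hT : T.WellFormed) (h : ParentChild X Y T)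
    (hv : v ∈ X) : v ∉ T.suppAt Y := by
  obtain ⟨⟨X', ts⟩, hR, rfl, t, ht, rfl⟩ := h
  rw [hT.suppAt_label ((IsSubtree.of_mem ht).trans hR)]
  cases hT.of_isSubtree hR with
  | node _ hd _ _ => exact Finset.disjoint_left.mp (hd t ht) hv

end FTree

namespace HGraph

variable {α : Type*} [DecidableEq α] {H : HGraph α} {A B C D E X₁ X₂ : Finset α} {v : α}

theorem ext {H₁ H₂ : HGraph α} (hv : H₁.verts = H₂.verts) (he : H₁.edges = H₂.edges) :
    H₁ = H₂ := by
  cases H₁; cases H₂; cases hv; cases he; rfl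

theorem restrict_verts (h : A ⊆ H.verts) : (H.restrict A).verts = A :=
  Finset.inter_eq_left.mpr h

theorem restrict_self (H : HGraph α) : H.restrict H.verts = H :=
  ext (Finset.inter_self _) (Finset.filter_true_of_mem H.edges_subset)

theorem restrict_restrict (h : B ⊆ A) : (H.restrict A).restrict B = H.restrict B := by
  refine ext ?_ ?_
  · simp only [restrict, ← Finset.inter_assoc, Finset.inter_eq_left.mpr h]
  · simp only [restrict, Finset.filter_filter]
    exact Finset.filter_congr fun e _ => ⟨And.right, fun he => ⟨he.trans h, he⟩⟩

theorem Connected.subset_or_subset (hE : (H.restrict E).Connected) (hEv : E ⊆ H.verts)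
    (hd : Disjoint X₁ X₂) (hEX : E ⊆ X₁ ∪ X₂)
    (hsplit : ∀ e ∈ H.edges, e ⊆ E → e ⊆ X₁ ∨ e ⊆ X₂) : E ⊆ X₁ ∨ E ⊆ X₂ := by
  by_contra! h
  obtain ⟨a, haE, ha⟩ := Finset.not_subset.mp h.1
  obtain ⟨b, hbE, hb⟩ := Finset.not_subset.mp h.2
  have ha₂ : a ∈ X₂ := (Finset.mem_union.mp (hEX haE)).resolve_left ha
  have hb₁ : b ∈ X₁ := (Finset.mem_union.mp (hEX hbE)).resolve_right hb
  obtain ⟨e, he, he₁, he₂⟩ := hE.2 (E ∩ X₁) (E ∩ X₂) ⟨b, Finset.mem_inter.mpr ⟨hbE, hb₁⟩⟩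
    ⟨a, Finset.mem_inter.mpr ⟨haE, ha₂⟩⟩
    (hd.mono Finset.inter_subset_right Finset.inter_subset_right)
    (by rw [← Finset.inter_union_distrib_left, Finset.inter_eq_left.mpr hEX, restrict_verts hEv])
  obtain ⟨heH, heE⟩ := Finset.mem_filter.mp he
  rcases hsplit e heH heE with h | h
  · exact he₁ (Finset.subset_inter heE h)
  · exact he₂ (Finset.subset_inter heE h)

theorem connected_union (hC : (H.restrict C).Connected) (hD : (H.restrict D).Connected)
    (hCv : C ⊆ H.verts) (hDv : D ⊆ H.verts) (hCD : (C ∩ D).Nonempty) :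
    (H.restrict (C ∪ D)).Connected := by
  have hv := restrict_verts (Finset.union_subset hCv hDv)
  obtain ⟨w, hw⟩ := hCD
  obtain ⟨hwC, hwD⟩ := Finset.mem_inter.mp hw
  refine ⟨⟨w, by rw [hv]; exact Finset.mem_union_left D hwC⟩, fun X₁ X₂ h₁ h₂ hd hu => ?_⟩
  rw [hv] at hu
  by_contra! hsplit
  have side : ∀ E, (H.restrict E).Connected → E ⊆ H.verts → E ⊆ C ∪ D → E ⊆ X₁ ∨ E ⊆ X₂ :=
    fun E hE hEv hECD => hE.subset_or_subset hEv hd (hu ▸ hECD) fun e he heE =>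
      or_iff_not_imp_left.mpr (hsplit e (Finset.mem_filter.mpr ⟨he, heE.trans hECD⟩))
  have absorb : ∀ {Y Z : Finset α}, Disjoint Y Z → C ∪ D ⊆ Y → Z ⊆ C ∪ D → Z.Nonempty → False :=
    fun hYZ hY hZ ⟨z, hz⟩ => Finset.disjoint_left.mp hYZ (hY (hZ hz)) hz
  rcases side C hC hCv Finset.subset_union_left with hC₁ | hC₂ <;>
    rcases side D hD hDv Finset.subset_union_right with hD₁ | hD₂
  · exact absorb hd (Finset.union_subset hC₁ hD₁) (hu ▸ Finset.subset_union_right) h₂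
  · exact Finset.disjoint_left.mp hd (hC₁ hwC) (hD₂ hwD)
  · exact Finset.disjoint_left.mp hd (hD₁ hwD) (hC₂ hwC)
  · exact absorb hd.symm (Finset.union_subset hC₂ hD₂) (hu ▸ Finset.subset_union_left) h₁

theorem exists_isComponent (hv : v ∈ H.verts) : ∃ C, H.IsComponent C ∧ v ∈ C := by
  let 𝒞 := H.verts.powerset.filter fun D => v ∈ D ∧ (H.restrict D).Connected
  have h𝒞 : ∀ {D}, D ∈ 𝒞 ↔ D ⊆ H.verts ∧ v ∈ D ∧ (H.restrict D).Connected := by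
    simp [𝒞]
  obtain ⟨C, hC, hmax⟩ := 𝒞.exists_max_image Finset.card
    ⟨{v}, h𝒞.mpr ⟨Finset.singleton_subset_iff.mpr hv, Finset.mem_singleton_self v,
      H.singleton_connected hv⟩⟩
  obtain ⟨hCv, hvC, hCc⟩ := h𝒞.mp hC
  refine ⟨C, ⟨hCv, hCc, fun D hCD hDv hDc => ?_⟩, hvC⟩
  exact (Finset.eq_of_subset_of_card_le hCD (hmax D (h𝒞.mpr ⟨hDv, hCD hvC, hDc⟩))).symm

theorem IsComponent.nonempty (hC : H.IsComponent C) : C.Nonempty :=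
  hC.2.1.1.mono Finset.inter_subset_left

theorem IsComponent.eq_of_mem (hC : H.IsComponent C) (hD : H.IsComponent D) (hvC : v ∈ C)
    (hvD : v ∈ D) : C = D := by
  have hCD := connected_union hC.2.1 hD.2.1 hC.1 hD.1 ⟨v, Finset.mem_inter.mpr ⟨hvC, hvD⟩⟩
  have hv := Finset.union_subset hC.1 hD.1
  exact (hC.2.2 _ Finset.subset_union_left hv hCD).symm.trans
    (hD.2.2 _ Finset.subset_union_right hv hCD)

theorem IsComponent.disjoint (hC : H.IsComponent C) (hD : H.IsComponent D) (hne : C ≠ D) :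
    Disjoint C D :=
  Finset.disjoint_left.mpr fun _ hvC hvD => hne (hC.eq_of_mem hD hvC hvD)

end HGraph

namespace IsConstruct

open FTree HGraph

variable {α : Type*} [LinearOrder α] {H : HGraph α} {R R' S T t : FTree α}

theorem support_eq (hT : IsConstruct H T) : T.support = H.verts := by
  induction hT with
  | @node H Y ts _ hYsub hmem hcover _ _ _ =>
    have hverts : (H.restrict (H.verts \ Y)).verts = H.verts \ Y :=
      restrict_verts Finset.sdiff_subset
    ext v
    rw [mem_support_node]
    constructor
    · rintro (hv | ⟨t, ht, hv⟩)
      · exact hYsub hv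
      · exact (Finset.mem_sdiff.mp ((hverts ▸ (hmem t ht).1) hv)).1
    · intro hv
      by_cases hvY : v ∈ Y
      · exact Or.inl hvY
      obtain ⟨C, hC, hvC⟩ := exists_isComponent (hverts ▸ Finset.mem_sdiff.mpr ⟨hv, hvY⟩)
      obtain ⟨t, ht, rfl⟩ := hcover C hC
      exact Or.inr ⟨t, ht, hvC⟩

theorem wellFormed (hT : IsConstruct H T) : T.WellFormed := by
  induction hT with
  | @node H Y ts hY _ hmem _ hsorted _ ih =>
    have hverts : (H.restrict (H.verts \ Y)).verts = H.verts \ Y :=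
      restrict_verts Finset.sdiff_subset
    refine .node hY (fun t ht => ?_) ?_ ih
    · exact Finset.disjoint_sdiff.mono_right (hverts ▸ (hmem t ht).1)
    · exact hsorted.imp_of_mem fun ha hb hab =>
        (hmem _ ha).disjoint (hmem _ hb) fun he => lt_irrefl _ (he ▸ hab)

theorem restrict_support (hT : IsConstruct H T) (h : IsSubtree R T) :
    IsConstruct (H.restrict R.support) R := by
  induction h generalizing H with
  | refl => rwa [hT.support_eq, restrict_self]
  | @child t u hR ht ih =>
    cases hT with
    | node _ _ _ _ _ _ _ hchild =>
      rw [← restrict_restrict (H := H) hR.support_subset]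
      exact ih (hchild t ht)

theorem isComponent_of_mem_children (hT : IsConstruct H T) (h : IsSubtree R T)
    (ht : t ∈ R.children) :
    ((H.restrict R.support).restrict ((H.restrict R.support).verts \ R.label)).IsComponent
      t.support := by
  obtain ⟨Y, ts⟩ := R
  cases hT.restrict_support h with | node _ _ _ _ hmem _ _ _ => exact hmem t ht

/-- The children of a node of a construct are the components of its support minus its label,
so they only depend on that label and that support. -/
theorem support_mem_nestSet_of_mem_children (hS : IsConstruct H S) (hT : IsConstruct H T)
    (hR : IsSubtree R S) (hR' : IsSubtree R' T) (hlabel : R'.label = R.label)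
    (hsupp : R'.support = R.support) (ht : t ∈ R.children) : t.support ∈ T.nestSet := by
  have hC := hS.isComponent_of_mem_children hR ht
  obtain ⟨v, hv⟩ := hC.nonempty
  have hv' := hC.1 hv
  simp only [restrict, Finset.mem_inter, Finset.mem_sdiff] at hv'
  obtain ⟨t', ht', hvt'⟩ : ∃ t' ∈ R'.children, v ∈ t'.support := by
    obtain ⟨Y, ts⟩ := R'
    have hvR' : v ∈ (FTree.node Y ts).support := hsupp ▸ hv'.1.1.1
    exact (mem_support_node.mp hvR').resolve_left fun hvY => hv'.1.2 (hlabel ▸ hvY)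
  have hC' := hT.isComponent_of_mem_children hR' ht'
  rw [hlabel, hsupp] at hC'
  rw [← hC'.eq_of_mem hC hvt' hv]
  obtain ⟨Y, ts⟩ := R'
  exact (IsSubtree.of_mem ht' |>.trans hR').support_mem_nestSet

theorem label_eq_of_nestSet_eq (hS : IsConstruct H S) (hT : IsConstruct H T)
    (h : S.nestSet = T.nestSet) : S.label = T.label := by
  ext v
  by_cases hv : v ∈ H.verts
  · rw [hS.wellFormed.mem_label_iff (hS.support_eq ▸ hv),
      hT.wellFormed.mem_label_iff (hT.support_eq ▸ hv), h, hS.support_eq, hT.support_eq]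
  · exact iff_of_false (fun hvS => hv (hS.support_eq ▸ label_subset_support S hvS))
      (fun hvT => hv (hT.support_eq ▸ label_subset_support T hvT))

theorem map_support_children_eq (hS : IsConstruct H S) (hT : IsConstruct H T)
    (h : S.label = T.label) : S.children.map support = T.children.map support := by
  have mem_iff : ∀ {U : FTree α}, IsConstruct H U → ∀ C,
      C ∈ U.children.map support ↔ (H.restrict (H.verts \ U.label)).IsComponent C := by
    intro U hU C
    cases hU with
    | node Y ts _ _ hmem hcover _ _ =>
      simp only [children, label, List.mem_map]
      exact ⟨fun ⟨t, ht, he⟩ => he ▸ hmem t ht, hcover C⟩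
  have sorted : ∀ {U : FTree α}, IsConstruct H U →
      (U.children.map support).Pairwise fun C D => C.max < D.max := by
    intro U hU
    cases hU with | node _ _ _ _ _ _ hsorted _ => exact List.pairwise_map.mpr hsorted
  have : Std.Irrefl fun C D : Finset α => C.max < D.max := ⟨fun _ => lt_irrefl _⟩
  have : Std.Antisymm fun C D : Finset α => C.max < D.max :=
    ⟨fun _ _ h h' => absurd (h.trans h') (lt_irrefl _)⟩
  exact (sorted hS).eq_of_mem_iff (sorted hT) fun C => by rw [mem_iff hS, mem_iff hT, h]

theorem eq_of_nestSet_eq (hS : IsConstruct H S) (hT : IsConstruct H T)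
    (h : S.nestSet = T.nestSet) : S = T := by
  induction S generalizing H T with
  | node Y ss ih =>
    obtain ⟨Z, tt⟩ := T
    have hlabel : Y = Z := hS.label_eq_of_nestSet_eq hT h
    have hmap : ss.map support = tt.map support := hS.map_support_children_eq hT hlabel
    subst hlabel
    congr 1
    refine List.ext_getElem (by simpa using congrArg List.length hmap) fun i hs ht => ?_
    have he : ss[i].support = tt[i].support := by
      simpa [hs, ht] using congrArg (·[i]?) hmap
    have hsi : IsSubtree ss[i] (FTree.node Y ss) := .of_mem (List.getElem_mem hs)
    have hti : IsSubtree tt[i] (FTree.node Y tt) := .of_mem (List.getElem_mem ht)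
    refine ih _ (List.getElem_mem hs) (hS.restrict_support hsi) ?_ ?_
    · rw [he]; exact hT.restrict_support hti
    · rw [hS.wellFormed.nestSet_eq_filter hsi, hT.wellFormed.nestSet_eq_filter hti, h, he]

end IsConstruct

section LeastNest

variable {α : Type*} [DecidableEq α] {𝒮 𝒯 : Finset (Finset α)} {N N' P Q A B : Finset α}
  {v x y : α}

theorem isLeast_erase_of_ne (hA : IsLeast {M | M ∈ 𝒮 ∧ v ∈ M} A) (hne : A ≠ N) :
    IsLeast {M | M ∈ 𝒮.erase N ∧ v ∈ M} A :=
  ⟨⟨Finset.mem_erase.mpr ⟨hne, hA.1.1⟩, hA.1.2⟩,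
    fun _ hM => hA.2 ⟨Finset.mem_of_mem_erase hM.1, hM.2⟩⟩

theorem eq_of_isLeast_of_erase_eq (h : 𝒮.erase N = 𝒯.erase N')
    (hA : IsLeast {M | M ∈ 𝒮 ∧ v ∈ M} A) (hB : IsLeast {M | M ∈ 𝒯 ∧ v ∈ M} B)
    (hAN : A ≠ N) (hBN : B ≠ N') : A = B :=
  (isLeast_erase_of_ne hA hAN).unique (h ▸ isLeast_erase_of_ne hB hBN)

theorem eq_and_eq_of_isLeast_erase (hPx : IsLeast {M | M ∈ 𝒮.erase N ∧ x ∈ M} P)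
    (hPy : IsLeast {M | M ∈ 𝒮.erase N ∧ y ∈ M} P) (hA : IsLeast {M | M ∈ 𝒮 ∧ x ∈ M} A)
    (hB : IsLeast {M | M ∈ 𝒮 ∧ y ∈ M} B) (hxB : x ∉ B) : N = B ∧ A = P := by
  have hNB : N = B := by
    by_contra hne
    exact hxB (hPy.2 ⟨Finset.mem_erase.mpr ⟨Ne.symm hne, hB.1.1⟩, hB.1.2⟩ hPx.1.2)
  refine ⟨hNB, (isLeast_erase_of_ne hA fun hAN => hxB ?_).unique hPx⟩
  exact hNB ▸ hAN ▸ hA.1.2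

theorem isLeast_erase_cases (hPx : IsLeast {M | M ∈ 𝒯.erase N ∧ x ∈ M} P)
    (hPy : IsLeast {M | M ∈ 𝒯.erase N ∧ y ∈ M} P) (hA : IsLeast {M | M ∈ 𝒯 ∧ x ∈ M} A)
    (hB : IsLeast {M | M ∈ 𝒯 ∧ y ∈ M} B) (hAB : A ≠ B) :
    (N = A ∧ A ⊂ P) ∨ (N = B ∧ A = P) := by
  by_cases hAN : A = N
  · have hBP : B = P := (isLeast_erase_of_ne hB fun hBN => hAB (hAN.trans hBN.symm)).unique hPy
    have hAP : A ⊆ P := hA.2 ⟨Finset.mem_of_mem_erase hPx.1.1, hPx.1.2⟩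
    exact Or.inl ⟨hAN.symm,
      Finset.ssubset_iff_subset_ne.mpr ⟨hAP, fun he => hAB (he.trans hBP.symm)⟩⟩
  · have hAP : A = P := (isLeast_erase_of_ne hA hAN).unique hPx
    refine Or.inr ⟨?_, hAP⟩
    by_contra hBN
    exact hAB (hAP.trans ((isLeast_erase_of_ne hB (Ne.symm hBN)).unique hPy).symm)

theorem eq_of_erase_eq_of_mem (h : 𝒮.erase N = 𝒯.erase N') (hxP : x ∈ P)
    (hPy : IsLeast {M | M ∈ 𝒮.erase N ∧ y ∈ M} P) (hQ𝒮 : Q ∈ 𝒮) (hQ𝒯 : Q ∈ 𝒯) (hyQ : y ∈ Q)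
    (hxQ : x ∉ Q) : 𝒮 = 𝒯 := by
  have hQ : Q ∉ 𝒮.erase N := fun hQ => hxQ (hPy.2 ⟨hQ, hyQ⟩ hxP)
  have hQN : Q = N := by_contra fun hne => hQ (Finset.mem_erase.mpr ⟨hne, hQ𝒮⟩)
  have hQN' : Q = N' := by_contra fun hne => hQ (h ▸ Finset.mem_erase.mpr ⟨hne, hQ𝒯⟩)
  calc 𝒮 = insert Q (𝒮.erase N) := by rw [hQN, Finset.insert_erase (hQN ▸ hQ𝒮)]
    _ = insert Q (𝒯.erase N') := by rw [h]
    _ = 𝒯 := by rw [hQN', Finset.insert_erase (hQN' ▸ hQ𝒯)]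

end LeastNest

namespace IsConstruction

open FTree

variable {α : Type*} [LinearOrder α] {H : HGraph α} {S T : FTree α} {NS NT P : Finset α}
  {v x y : α}

theorem exists_isSubtree_label_eq (hS : IsConstruction H S) (hv : v ∈ H.verts) :
    ∃ R, IsSubtree R S ∧ R.label = {v} := by
  obtain ⟨R, hR, hvR⟩ := exists_isSubtree_mem_label (hS.1.support_eq ▸ hv)
  obtain ⟨w, hw⟩ := Finset.card_eq_one.mp (hS.2 _ (mem_labels_iff.mpr ⟨R, hR, rfl⟩))
  rw [hw, Finset.mem_singleton] at hvR
  exact ⟨R, hR, hvR ▸ hw⟩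

theorem isLeast_suppAt (hS : IsConstruction H S) (hv : v ∈ H.verts) :
    IsLeast {N | N ∈ S.nestSet ∧ v ∈ N} (S.suppAt {v}) := by
  obtain ⟨R, hR, hRv⟩ := hS.exists_isSubtree_label_eq hv
  rw [← hRv, hS.1.wellFormed.suppAt_label hR]
  exact hS.1.wellFormed.isLeast_support hR (hRv ▸ Finset.mem_singleton_self v)

theorem injOn_suppAt (hS : IsConstruction H S) : Set.InjOn (fun v => S.suppAt {v}) H.verts := by
  intro v hv w hw he
  obtain ⟨R, hR, hRv⟩ := hS.exists_isSubtree_label_eq hv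
  obtain ⟨R', hR', hR'w⟩ := hS.exists_isSubtree_label_eq hw
  have hRR' : R = R' := hS.1.wellFormed.eq_of_support_eq hR hR' <| by
    rw [← hS.1.wellFormed.suppAt_label hR, ← hS.1.wellFormed.suppAt_label hR', hRv, hR'w]
    exact he
  exact Finset.singleton_injective (hRv.symm.trans (hRR' ▸ hR'w))

/-- The nest of the child `{y}` of `{x}` in `S` is then also a nest of `T`, and it can only be
the nest removed on both sides. -/
theorem eq_of_parentChild_of_suppAt_eq (hS : IsConstruction H S) (hT : IsConstruction H T)
    (h : S.nestSet.erase NS = T.nestSet.erase NT) (hPC : ParentChild {x} {y} S) (hxP : x ∈ P)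
    (hPy : IsLeast {M | M ∈ S.nestSet.erase NS ∧ y ∈ M} P) (hx : x ∈ H.verts)
    (hTx : T.suppAt {x} = S.suppAt {x}) : S = T := by
  have hxy := hS.1.wellFormed.not_mem_suppAt_of_parentChild hPC (Finset.mem_singleton_self x)
  obtain ⟨Rx, hRx, hRxlab, ty, hty, htylab⟩ := hPC
  obtain ⟨RTx, hRTx, hRTxlab⟩ := hT.exists_isSubtree_label_eq hx
  have htyS : IsSubtree ty S := by
    obtain ⟨X, ts⟩ := Rx
    exact (IsSubtree.of_mem hty).trans hRx
  have hsupp : RTx.support = Rx.support := by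
    rw [← hT.1.wellFormed.suppAt_label hRTx, ← hS.1.wellFormed.suppAt_label hRx, hRTxlab,
      hRxlab, hTx]
  rw [← htylab, hS.1.wellFormed.suppAt_label htyS] at hxy
  exact hS.1.eq_of_nestSet_eq hT.1 (eq_of_erase_eq_of_mem h hxP hPy htyS.support_mem_nestSet
    (hS.1.support_mem_nestSet_of_mem_children hT.1 hRx hRTx (hRTxlab.trans hRxlab.symm) hsupp hty)
    (label_subset_support ty (htylab ▸ Finset.mem_singleton_self y)) hxy)

end IsConstruction

open FTree in
theorem Flip.exists_suppAt_ssubset {α : Type*} [LinearOrder α] {H : HGraph α} {S T : FTree α}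
    (h : Flip H S T) : ∃ x ∈ H.verts, ∃ y, x < y ∧ T.suppAt {x} ⊂ S.suppAt {x} ∧
      ∀ z ∈ H.verts, z ≠ x → z ≠ y → T.suppAt {z} = S.suppAt {z} := by
  obtain ⟨hS, hT, hST, V, x, y, hV, -, -, hxyV, ⟨NS, -, -, hVS⟩, ⟨NT, -, -, hVT⟩, hPC, hxy⟩ := h
  obtain ⟨RV, hRV, hRVlab⟩ := mem_labels_iff.mp hxyV
  have hP : ∀ v ∈ ({x, y} : Finset α), IsLeast {N | N ∈ V.nestSet ∧ v ∈ N} RV.support :=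
    fun v hv => hV.wellFormed.isLeast_support hRV (hRVlab ▸ hv)
  have hverts : ∀ v ∈ ({x, y} : Finset α), v ∈ H.verts := fun v hv =>
    hV.support_eq ▸ hRV.support_subset (label_subset_support RV (hRVlab ▸ hv))
  have hx := hverts x (by simp)
  have hy := hverts y (by simp)
  have hSP := fun v hv => hVS ▸ hP v hv
  have hTP := fun v hv => hVT ▸ hP v hv
  obtain ⟨hNS, hSx⟩ := eq_and_eq_of_isLeast_erase (hSP x (by simp)) (hSP y (by simp))
    (hS.isLeast_suppAt hx) (hS.isLeast_suppAt hy)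
    (hS.1.wellFormed.not_mem_suppAt_of_parentChild hPC (Finset.mem_singleton_self x))
  rcases isLeast_erase_cases (hTP x (by simp)) (hTP y (by simp)) (hT.isLeast_suppAt hx)
    (hT.isLeast_suppAt hy) fun he => hxy.ne (hT.injOn_suppAt hx hy he) with ⟨hNT, hTx⟩ | ⟨-, hTx⟩
  · refine ⟨x, hx, y, hxy, hSx ▸ hTx, fun z hz hzx hzy => Eq.symm ?_⟩
    exact eq_of_isLeast_of_erase_eq (hVS.symm.trans hVT) (hS.isLeast_suppAt hz)
      (hT.isLeast_suppAt hz) (hNS ▸ fun he => hzy (hS.injOn_suppAt hz hy he))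
      (hNT ▸ fun he => hzx (hT.injOn_suppAt hz hx he))
  · exact absurd (hS.eq_of_parentChild_of_suppAt_eq hT (hVS.symm.trans hVT) hPC
      (hP x (by simp)).1.2 (hSP y (by simp)) hx (hTx.trans hSx.symm)) hST

theorem Flip.toLex_suppAt_lt {α : Type*} [LinearOrder α] {H : HGraph α} {S T : FTree α}
    (h : Flip H S T) :
    toLex (fun v : H.verts => T.suppAt {v.1}) < toLex (fun v : H.verts => S.suppAt {v.1}) := by
  obtain ⟨x, hx, y, hxy, hlt, heq⟩ := h.exists_suppAt_ssubset
  exact ⟨⟨x, hx⟩, fun z hz => heq z z.2 (ne_of_lt hz) (ne_of_lt (lt_trans hz hxy)), hlt⟩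

/-- Theorem `thm:termination`.  The flip rewriting on the constructions
of an ordered connected hypergraph is terminating: there is no infinite sequence of
flips `S₀ → S₁ → S₂ → ⋯`. -/
theorem stmt9 {α : Type*} [LinearOrder α] (H : HGraph α) (hH : H.Connected) :
    ¬ ∃ f : ℕ → FTree α,
      (∀ n : ℕ, IsConstruction H (f n)) ∧ ∀ n : ℕ, Flip H (f n) (f (n + 1)) := by
  rintro ⟨f, -, hf⟩
  obtain ⟨n, hn⟩ := WellFounded.not_rel_apply_succ (r := (· < ·)) fun n =>
    toLex fun v : H.verts => (f n).suppAt {v.1}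
  exact hn (hf n).toLex_suppAt_lt
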